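/- arXiv:1302.3501 — 4 statements merged into one kernel-verified Lean document; each statement's English description precedes it below -/
import Mathlib

section
/- Let X and Y be real Hilbert spaces and let G : X → Y be Fréchet differentiable on the closed ball B of radius 2r around u₀ ∈ X, with derivative DG(u) a continuous linear map for each u ∈ B. Assume DG is bounded on B (there is M > 0 with ‖DG(u)‖ ≤ M for all u ∈ B) and that G satisfies the tangential cone condition: there is c > 0 such that ‖G(u) − G(ũ) − DG(u)(u − ũ)‖_Y ≤ c · ‖u − ũ‖_X · ‖G(u) − G(ũ)‖_Y for all u, ũ ∈ B. Fix ρ ∈ (0,1) and τ > 1/ρ, and let u† ∈ X denote the true parameter. Then there exists ε > 0 with the following property: whenever u⋆ ∈ X satisfies G(u⋆) = G(u†) and ‖u₀ − u⋆‖_X ≤ ε, η > 0, and y ∈ Y satisfies ‖y − G(u†)‖_Y ≤ η, every sequence (u_m) in X with u_0 = u₀ obeying the regularizing Levenberg–Marquardt recursion — namely, for each m such that ‖y − G(u_m)‖_Y > τη there exist h_m ∈ X and α_m > 0 with (DG(u_m)† ∘ DG(u_m) + α_m • id)(h_m) = DG(u_m)†(y − G(u_m)) (where DG(u_m)† denotes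 the Hilbert-space adjoint of DG(u_m)), ‖y − G(u_m) − DG(u_m) h_m‖_Y = ρ ‖y − G(u_m)‖_Y, and u_{m+1} = u_m + h_m — terminates by the discrepancy principle after finitely many iterations: there exists a finite index k with ‖y − G(u_k)‖_Y ≤ τη. -/
/-!
Hanke's argument: write `e = u m - u⋆`, `b = y - G (u m)` and `s = b - DG (u m) h` for the
linearized residual. The normal equation says `α h = DG(u m)† s`, so
`α (‖e + h‖² - ‖e‖²) ≤ 2 ⟪DG(u m) (e + h), s⟫`. The tangential cone condition makes
`DG(u m) (e + h)` equal to `-s` up to an error of size `c ‖e‖ ‖b‖ + η`, and as long as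
`‖b‖ > τ η` and `e` is small this inner product is at most `-δ ρ ‖b‖²`, with
`δ = (ρ - 1/τ)/2 > 0`. Since `α` is bounded by `M² ρ / (1 - ρ)`, every step lowers
`‖u m - u⋆‖²` by a fixed amount, which cannot go on forever.
-/

open Metric RealInnerProductSpace ContinuousLinearMap

namespace LevenbergMarquardt

theorem false_of_uniform_decrease {a : ℕ → ℝ} {C γ : ℝ} (hnonneg : ∀ m, 0 ≤ a m)
    (h0 : a 0 ≤ C) (hγ : 0 < γ) (hstep : ∀ m, a m ≤ C → a (m + 1) ≤ a m - γ) : False := by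
  have hle : ∀ m : ℕ, a m ≤ C - m * γ := by
    intro m
    induction m with
    | zero => simpa using h0
    | succ m ih =>
      have := hstep m (by nlinarith [m.cast_nonneg (α := ℝ)])
      push_cast
      linarith
  obtain ⟨N, hN⟩ := exists_nat_gt (C / γ)
  rw [div_lt_iff₀ hγ] at hN
  linarith [hle N, hnonneg N]

variable {X Y : Type*} [NormedAddCommGroup X] [InnerProductSpace ℝ X]
  [NormedAddCommGroup Y] [InnerProductSpace ℝ Y] {A : X →L[ℝ] Y} {h : X}

theorem inner_linearized_residual_le {G : X → Y} {u ustar : X} {y : Y} {q η ρ : ℝ}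
    (htcc : ‖G u - G ustar - A (u - ustar)‖ ≤ q * ‖G u - G ustar‖) (hq : 0 ≤ q)
    (hy : ‖y - G ustar‖ ≤ η) (hres : ‖y - G u - A h‖ = ρ * ‖y - G u‖) :
    ⟪A (u - ustar + h), y - G u - A h⟫
      ≤ (q * (‖y - G u‖ + η) + η - ρ * ‖y - G u‖) * (ρ * ‖y - G u‖) := by
  set s := y - G u - A h
  set w := A (u - ustar) - (G u - G ustar)
  have hsplit : A (u - ustar + h) = w + (y - G ustar) - s := by
    simp only [s, w, map_add]
    abel
  have hG : ‖G u - G ustar‖ ≤ ‖y - G u‖ + η := by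
    calc ‖G u - G ustar‖ = ‖(y - G ustar) - (y - G u)‖ := by abel_nf
      _ ≤ ‖y - G ustar‖ + ‖y - G u‖ := norm_sub_le _ _
      _ ≤ ‖y - G u‖ + η := by linarith
  have hw : ‖w‖ ≤ q * (‖y - G u‖ + η) := by
    rw [norm_sub_rev]
    exact htcc.trans (mul_le_mul_of_nonneg_left hG hq)
  have hs : 0 ≤ ‖s‖ := norm_nonneg s
  calc ⟪A (u - ustar + h), s⟫ = ⟪w, s⟫ + ⟪y - G ustar, s⟫ - ‖s‖ ^ 2 := by
        rw [hsplit, inner_sub_left, inner_add_left, real_inner_self_eq_norm_sq]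
    _ ≤ ‖w‖ * ‖s‖ + ‖y - G ustar‖ * ‖s‖ - ‖s‖ ^ 2 := by
        gcongr <;> exact real_inner_le_norm _ _
    _ ≤ (q * (‖y - G u‖ + η) + η - ‖s‖) * ‖s‖ := by nlinarith
    _ = _ := by rw [hres]

variable [CompleteSpace X] [CompleteSpace Y] {α : ℝ} {b : Y}

theorem smul_eq_adjoint_residual
    (hn : (adjoint A ∘L A + α • ContinuousLinearMap.id ℝ X) h = adjoint A b) :
    α • h = adjoint A (b - A h) := by
  simp only [add_apply, comp_apply, smul_apply, id_apply] at hn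
  rw [map_sub, ← hn, add_sub_cancel_left]

theorem mul_one_sub_le_of_residual {M ρ : ℝ} (hα : 0 < α)
    (hn : (adjoint A ∘L A + α • ContinuousLinearMap.id ℝ X) h = adjoint A b) (hA : ‖A‖ ≤ M)
    (hres : ‖b - A h‖ = ρ * ‖b‖) (hb : 0 < ‖b‖) : α * (1 - ρ) ≤ M ^ 2 * ρ := by
  have hM : 0 ≤ M := (norm_nonneg A).trans hA
  have hAh : (1 - ρ) * ‖b‖ ≤ M * ‖h‖ :=
    calc (1 - ρ) * ‖b‖ = ‖b‖ - ‖b - A h‖ := by rw [hres]; ring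
      _ ≤ ‖A h‖ := by simpa using norm_sub_norm_le b (b - A h)
      _ ≤ M * ‖h‖ := A.le_of_opNorm_le hA h
  have hαh : α * ‖h‖ ≤ M * (ρ * ‖b‖) := by
    calc α * ‖h‖ = ‖adjoint A (b - A h)‖ := by
          rw [← smul_eq_adjoint_residual hn, norm_smul, Real.norm_of_nonneg hα.le]
      _ ≤ M * ‖b - A h‖ :=
          (adjoint A).le_of_opNorm_le (by rwa [LinearIsometryEquiv.norm_map]) _
      _ = M * (ρ * ‖b‖) := by rw [hres]
  have : α * (1 - ρ) * ‖b‖ ≤ M ^ 2 * ρ * ‖b‖ := by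
    calc α * (1 - ρ) * ‖b‖ = α * ((1 - ρ) * ‖b‖) := by ring
      _ ≤ α * (M * ‖h‖) := mul_le_mul_of_nonneg_left hAh hα.le
      _ = M * (α * ‖h‖) := by ring
      _ ≤ M * (M * (ρ * ‖b‖)) := mul_le_mul_of_nonneg_left hαh hM
      _ = M ^ 2 * ρ * ‖b‖ := by ring
  exact le_of_mul_le_mul_right this hb

theorem mul_norm_add_sq_le (hα : 0 < α)
    (hn : (adjoint A ∘L A + α • ContinuousLinearMap.id ℝ X) h = adjoint A b) (e : X) :
    α * ‖e + h‖ ^ 2 ≤ α * ‖e‖ ^ 2 + 2 * ⟪A (e + h), b - A h⟫ := by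
  have hinner : α * ⟪e + h, h⟫ = ⟪A (e + h), b - A h⟫ := by
    rw [← real_inner_smul_right, smul_eq_adjoint_residual hn, adjoint_inner_right]
  have hexp : ‖e + h‖ ^ 2 = ‖e‖ ^ 2 + 2 * ⟪e + h, h⟫ - ‖h‖ ^ 2 := by
    rw [norm_add_sq_real, inner_add_left, real_inner_self_eq_norm_sq]
    ring
  rw [hexp]
  nlinarith [mul_nonneg hα.le (sq_nonneg ‖h‖)]

theorem norm_add_sq_le_of_inner_le {M ρ δ : ℝ} (hα : 0 < α)
    (hn : (adjoint A ∘L A + α • ContinuousLinearMap.id ℝ X) h = adjoint A b) (hA : ‖A‖ ≤ M)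
    (hM : 0 < M) (hres : ‖b - A h‖ = ρ * ‖b‖) (hb : 0 < ‖b‖) (hδ : 0 ≤ δ) {e : X}
    (hinner : ⟪A (e + h), b - A h⟫ ≤ -(δ * ρ * ‖b‖ ^ 2)) :
    ‖e + h‖ ^ 2 ≤ ‖e‖ ^ 2 - 2 * δ * (1 - ρ) * ‖b‖ ^ 2 / M ^ 2 := by
  have hdesc := mul_norm_add_sq_le hα hn e
  have hαle := mul_one_sub_le_of_residual hα hn hA hres hb
  have hscaled : α * M ^ 2 * ‖e + h‖ ^ 2
      ≤ α * M ^ 2 * (‖e‖ ^ 2 - 2 * δ * (1 - ρ) * ‖b‖ ^ 2 / M ^ 2) := by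
    have hrhs : α * M ^ 2 * (‖e‖ ^ 2 - 2 * δ * (1 - ρ) * ‖b‖ ^ 2 / M ^ 2)
        = M ^ 2 * (α * ‖e‖ ^ 2) - 2 * δ * ‖b‖ ^ 2 * (α * (1 - ρ)) := by
      field_simp
    rw [hrhs]
    nlinarith [mul_le_mul_of_nonneg_left hαle (by positivity : 0 ≤ 2 * δ * ‖b‖ ^ 2),
      mul_le_mul_of_nonneg_left hdesc (sq_nonneg M)]
  exact le_of_mul_le_mul_left hscaled (by positivity)

theorem norm_sub_sq_le_of_step {G : X → Y} {u ustar : X} {y : Y} {q η ρ τ δ M : ℝ}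
    (hα : 0 < α)
    (hn : (adjoint A ∘L A + α • ContinuousLinearMap.id ℝ X) h = adjoint A (y - G u))
    (hres : ‖y - G u - A h‖ = ρ * ‖y - G u‖) (hA : ‖A‖ ≤ M) (hM : 0 < M)
    (htcc : ‖G u - G ustar - A (u - ustar)‖ ≤ q * ‖G u - G ustar‖) (hq : 0 ≤ q)
    (hy : ‖y - G ustar‖ ≤ η) (hρ : ρ ≤ 1) (hτ : 0 < τ) (hδ : 0 ≤ δ)
    (hqδ : q * (1 + 1 / τ) + 1 / τ + δ ≤ ρ) (hfar : τ * η < ‖y - G u‖) :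
    ‖u + h - ustar‖ ^ 2 ≤ ‖u - ustar‖ ^ 2 - 2 * δ * (1 - ρ) * (τ * η) ^ 2 / M ^ 2 := by
  set b := y - G u
  have hη : 0 ≤ η := (norm_nonneg _).trans hy
  have hρ0 : 0 ≤ ρ := by
    nlinarith [show 0 < 1 / τ by positivity, mul_nonneg hq (show 0 ≤ 1 + 1 / τ by positivity)]
  have hb : 0 < ‖b‖ := lt_of_le_of_lt (by positivity) hfar
  have hηb : η ≤ 1 / τ * ‖b‖ := by
    rw [one_div, inv_mul_eq_div, le_div_iff₀ hτ]
    linarith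
  have hfactor : q * (‖b‖ + η) + η - ρ * ‖b‖ ≤ -(δ * ‖b‖) := by
    nlinarith
  have hinner : ⟪A (u - ustar + h), b - A h⟫ ≤ -(δ * ρ * ‖b‖ ^ 2) := by
    refine (inner_linearized_residual_le htcc hq hy hres).trans ?_
    nlinarith [mul_le_mul_of_nonneg_right hfactor (by positivity : 0 ≤ ρ * ‖b‖)]
  rw [show u + h - ustar = u - ustar + h by abel]
  refine (norm_add_sq_le_of_inner_le hα hn hA hM hres hb hδ hinner).trans (sub_le_sub_left ?_ _)
  have : 0 ≤ 1 - ρ := by linarith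
  gcongr

end LevenbergMarquardt

theorem stmt_0_general
    {X Y : Type*}
    [NormedAddCommGroup X] [InnerProductSpace ℝ X] [CompleteSpace X]
    [NormedAddCommGroup Y] [InnerProductSpace ℝ Y] [CompleteSpace Y]
    (G : X → Y) (DG : X → X →L[ℝ] Y) (u₀ : X) (r : ℝ) (hr : 0 < r)
    (B : Set X) (hB : B = closedBall u₀ (2 * r))
    (M : ℝ) (hM : 0 < M) (hbound : ∀ u ∈ B, ‖DG u‖ ≤ M)
    (c : ℝ) (hc : 0 < c)
    (htcc : ∀ u ∈ B, ∀ u' ∈ B,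
      ‖G u - G u' - DG u (u - u')‖ ≤ c * ‖u - u'‖ * ‖G u - G u'‖)
    (ρ τ : ℝ) (hρ : ρ ∈ Set.Ioo (0 : ℝ) 1) (hτ : 1 / ρ < τ)
    (udag : X) :
    ∃ ε > 0, ∀ ustar : X, G ustar = G udag → ‖u₀ - ustar‖ ≤ ε →
      ∀ η : ℝ, 0 < η → ∀ y : Y, ‖y - G udag‖ ≤ η →
        ∀ u : ℕ → X, u 0 = u₀ →
          (∀ m : ℕ, τ * η < ‖y - G (u m)‖ →
            ∃ (h : X) (α : ℝ), 0 < α ∧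
              ((ContinuousLinearMap.adjoint (DG (u m))).comp (DG (u m))
                  + α • ContinuousLinearMap.id ℝ X) h
                = ContinuousLinearMap.adjoint (DG (u m)) (y - G (u m)) ∧
              ‖y - G (u m) - DG (u m) h‖ = ρ * ‖y - G (u m)‖ ∧
              u (m + 1) = u m + h) →
          ∃ k : ℕ, ‖y - G (u k)‖ ≤ τ * η := by
  obtain ⟨hρ0, hρ1⟩ := hρ
  have hτ0 : 0 < τ := (one_div_pos.2 hρ0).trans hτ
  set δ := (ρ - 1 / τ) / 2 with hδ_def
  have hδ : 0 < δ := by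
    rw [one_div_lt hρ0 hτ0] at hτ
    linarith
  set ε := min r (δ / (c * (1 + 1 / τ)))
  have hcε : c * ε * (1 + 1 / τ) ≤ δ := by
    rw [mul_right_comm, ← le_div_iff₀' (by positivity)]
    exact min_le_right _ _
  refine ⟨ε, by positivity, fun ustar hGstar hε η hη y hy u hu0 hrec => ?_⟩
  by_contra! hfar
  have hball : ∀ v, ‖v - ustar‖ ≤ ε → v ∈ B := fun v hv => by
    rw [hB, mem_closedBall_iff_norm]
    calc ‖v - u₀‖ ≤ ‖v - ustar‖ + ‖ustar - u₀‖ := norm_sub_le_norm_sub_add_norm_sub _ _ _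
      _ = ‖v - ustar‖ + ‖u₀ - ustar‖ := by rw [norm_sub_rev ustar]
      _ ≤ 2 * r := by linarith [min_le_left r (δ / (c * (1 + 1 / τ)))]
  refine LevenbergMarquardt.false_of_uniform_decrease (a := fun m => ‖u m - ustar‖ ^ 2)
    (C := ε ^ 2) (fun m => sq_nonneg _)
    (by rw [hu0]; gcongr) (by positivity : 0 < 2 * δ * (1 - ρ) * (τ * η) ^ 2 / M ^ 2) ?_
  intro m hmε
  obtain ⟨h, α, hα, hn, hres, hsucc⟩ := hrec m (hfar m)
  have hm : ‖u m - ustar‖ ≤ ε := le_of_pow_le_pow_left₀ two_ne_zero (by positivity) hmε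
  have hustar : ustar ∈ B := hball ustar (by rw [sub_self, norm_zero]; positivity)
  simp only [hsucc]
  refine LevenbergMarquardt.norm_sub_sq_le_of_step hα hn hres (hbound _ (hball _ hm)) hM
    (htcc _ (hball _ hm) _ hustar) (by positivity) (hGstar ▸ hy) hρ1.le hτ0 hδ.le ?_ (hfar m)
  nlinarith [mul_le_mul_of_nonneg_right (mul_le_mul_of_nonneg_left hm hc.le)
    (by positivity : 0 ≤ 1 + 1 / τ)]

/-- Hanke's regularizing Levenberg–Marquardt scheme terminates after finitely many
iterations by the discrepancy principle. `G : X → Y` is Fréchet differentiable on the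
closed ball `B` of radius `2r` around `u₀`, with derivative `DG u` bounded on `B` and
satisfying the tangential cone condition. If `u₀` is close enough to some `u⋆` with
`G u⋆ = G u†`, then for any noisy data `y` with `‖y − G u†‖ ≤ η` and any sequence
obeying the regularizing LM recursion (normal equation with adjoint, residual reduced
by the factor `ρ`) there is a finite index `k` with `‖y − G (u k)‖ ≤ τ η`. -/
theorem stmt_0
    {X Y : Type*}
    [NormedAddCommGroup X] [InnerProductSpace ℝ X] [CompleteSpace X]
    [NormedAddCommGroup Y] [InnerProductSpace ℝ Y] [CompleteSpace Y]
    (G : X → Y) (DG : X → X →L[ℝ] Y) (u₀ : X) (r : ℝ) (hr : 0 < r)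
    (B : Set X) (hB : B = closedBall u₀ (2 * r))
    (hdiff : ∀ u ∈ B, HasFDerivWithinAt G (DG u) B u)
    (M : ℝ) (hM : 0 < M) (hbound : ∀ u ∈ B, ‖DG u‖ ≤ M)
    (c : ℝ) (hc : 0 < c)
    (htcc : ∀ u ∈ B, ∀ u' ∈ B,
      ‖G u - G u' - DG u (u - u')‖ ≤ c * ‖u - u'‖ * ‖G u - G u'‖)
    (ρ τ : ℝ) (hρ : ρ ∈ Set.Ioo (0 : ℝ) 1) (hτ : 1 / ρ < τ)
    (udag : X) :
    ∃ ε > 0, ∀ ustar : X, G ustar = G udag → ‖u₀ - ustar‖ ≤ ε →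
      ∀ η : ℝ, 0 < η → ∀ y : Y, ‖y - G udag‖ ≤ η →
        ∀ u : ℕ → X, u 0 = u₀ →
          (∀ m : ℕ, τ * η < ‖y - G (u m)‖ →
            ∃ (h : X) (α : ℝ), 0 < α ∧
              ((ContinuousLinearMap.adjoint (DG (u m))).comp (DG (u m))
                  + α • ContinuousLinearMap.id ℝ X) h
                = ContinuousLinearMap.adjoint (DG (u m)) (y - G (u m)) ∧
              ‖y - G (u m) - DG (u m) h‖ = ρ * ‖y - G (u m)‖ ∧
              u (m + 1) = u m + h) →
          ∃ k : ℕ, ‖y - G (u k)‖ ≤ τ * η :=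
  stmt_0_general G DG u₀ r hr B hB M hM hbound c hc htcc ρ τ hρ hτ udag
end

section
/- Let n, p be positive natural numbers, let Γ be an n×n real positive definite matrix, let C be a p×p real positive definite matrix, let A be an n×p real matrix, and let b ∈ ℝⁿ. Define, for α > 0, κ(α) = α² · ((A C Aᵀ + α Γ)⁻¹ b)ᵀ Γ ((A C Aᵀ + α Γ)⁻¹ b). Then κ is monotone nondecreasing on (0, ∞): for all 0 < α₁ ≤ α₂ one has κ(α₁) ≤ κ(α₂). -/
/-!
For `α > 0` put `w = (ACAᵀ + αΓ)⁻¹ b` and `x_α = CAᵀw`. Then `b - A x_α = αΓw`, so `κ(α)` is the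
`Γ⁻¹`-weighted squared residual of `x_α`, and `x_α` satisfies the normal equation
`AᵀΓ⁻¹(b - Ax) = αC⁻¹x` of the Tikhonov functional `‖b - Ax‖²_{Γ⁻¹} + α‖x‖²_{C⁻¹}`, hence minimizes it.
For any family of minimizers of `R + αP`, comparing the minimality of `x_{α₁}` and `x_{α₂}` gives
`P(x_{α₂}) ≤ P(x_{α₁})` and then `R(x_{α₁}) ≤ R(x_{α₂})`.
-/

open Matrix

theorem le_of_minimizes_add_mul {X : Type*} (R P : X → ℝ) {α₁ α₂ : ℝ} (hα₁ : 0 ≤ α₁)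
    (hlt : α₁ < α₂) {x₁ x₂ : X} (h₁ : ∀ y, R x₁ + α₁ * P x₁ ≤ R y + α₁ * P y)
    (h₂ : ∀ y, R x₂ + α₂ * P x₂ ≤ R y + α₂ * P y) : R x₁ ≤ R x₂ := by
  have hP : P x₂ ≤ P x₁ := by nlinarith [h₁ x₂, h₂ x₁]
  nlinarith [h₁ x₂]

section Quadratic

variable {m q : Type*} [Fintype m] [Fintype q]

theorem Matrix.IsHermitian.add_dotProduct_mulVec_add {M : Matrix m m ℝ} (hM : M.IsHermitian)
    (u v : m → ℝ) :
    (u + v) ⬝ᵥ (M *ᵥ (u + v)) = u ⬝ᵥ (M *ᵥ u) + 2 * (v ⬝ᵥ (M *ᵥ u)) + v ⬝ᵥ (M *ᵥ v) := by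
  have hMt : Mᵀ = M := by simpa using hM.eq
  have hswap : u ⬝ᵥ (M *ᵥ v) = v ⬝ᵥ (M *ᵥ u) := by
    rw [dotProduct_mulVec, ← mulVec_transpose, hMt, dotProduct_comm]
  simp only [mulVec_add, dotProduct_add, add_dotProduct, hswap]
  ring

def tikhonov (Q : Matrix m m ℝ) (P : Matrix q q ℝ) (A : Matrix m q ℝ) (b : m → ℝ) (α : ℝ)
    (x : q → ℝ) : ℝ :=
  (b - A *ᵥ x) ⬝ᵥ (Q *ᵥ (b - A *ᵥ x)) + α * (x ⬝ᵥ (P *ᵥ x))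

theorem tikhonov_le_of_normal_eq {Q : Matrix m m ℝ} {P : Matrix q q ℝ} (hQ : Q.PosSemidef)
    (hP : P.PosSemidef) (A : Matrix m q ℝ) (b : m → ℝ) {α : ℝ} (hα : 0 ≤ α) {x : q → ℝ}
    (hx : Aᵀ *ᵥ (Q *ᵥ (b - A *ᵥ x)) = α • (P *ᵥ x)) (y : q → ℝ) :
    tikhonov Q P A b α x ≤ tikhonov Q P A b α y := by
  set h := y - x
  have hy : y = x + h := by simp [h]
  have hres : b - A *ᵥ y = (b - A *ᵥ x) + A *ᵥ (-h) := by
    rw [hy, mulVec_add, mulVec_neg]; abel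
  have hcross : A *ᵥ (-h) ⬝ᵥ (Q *ᵥ (b - A *ᵥ x)) = -(α * (h ⬝ᵥ (P *ᵥ x))) := by
    rw [dotProduct_comm, dotProduct_mulVec, ← mulVec_transpose, dotProduct_comm, hx]
    simp
  have hQh : 0 ≤ A *ᵥ (-h) ⬝ᵥ (Q *ᵥ (A *ᵥ (-h))) := by
    simpa using hQ.dotProduct_mulVec_nonneg (A *ᵥ (-h))
  have hPh : 0 ≤ h ⬝ᵥ (P *ᵥ h) := by simpa using hP.dotProduct_mulVec_nonneg h
  rw [tikhonov, tikhonov, hres, hQ.isHermitian.add_dotProduct_mulVec_add, hcross, hy,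
    hP.isHermitian.add_dotProduct_mulVec_add]
  nlinarith [mul_nonneg hα hPh]

end Quadratic

section LevenbergMarquardt

variable {n p : ℕ} {Γ : Matrix (Fin n) (Fin n) ℝ} {C : Matrix (Fin p) (Fin p) ℝ}

theorem levenbergMarquardt_residual (A : Matrix (Fin n) (Fin p) ℝ) {b w : Fin n → ℝ} {α : ℝ}
    (hw : (A * C * Aᵀ + α • Γ) *ᵥ w = b) :
    b - A *ᵥ (C *ᵥ (Aᵀ *ᵥ w)) = α • (Γ *ᵥ w) := by
  rw [← hw, mulVec_mulVec, mulVec_mulVec, add_mulVec, smul_mulVec, add_sub_cancel_left]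

theorem exists_tikhonov_minimizer (hΓ : Γ.PosDef) (hC : C.PosDef)
    (A : Matrix (Fin n) (Fin p) ℝ) (b : Fin n → ℝ) {α : ℝ} (hα : 0 < α) :
    ∃ x : Fin p → ℝ,
      (b - A *ᵥ x) ⬝ᵥ (Γ⁻¹ *ᵥ (b - A *ᵥ x)) = α ^ 2 *
        (((A * C * Aᵀ + α • Γ)⁻¹ *ᵥ b) ⬝ᵥ (Γ *ᵥ ((A * C * Aᵀ + α • Γ)⁻¹ *ᵥ b))) ∧
      ∀ y, tikhonov Γ⁻¹ C⁻¹ A b α x ≤ tikhonov Γ⁻¹ C⁻¹ A b α y := by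
  have hACA : (A * C * Aᵀ).PosSemidef := by
    simpa using hC.posSemidef.mul_mul_conjTranspose_same A
  have hS : (A * C * Aᵀ + α • Γ).PosDef := .posSemidef_add hACA (hΓ.smul hα)
  set w := (A * C * Aᵀ + α • Γ)⁻¹ *ᵥ b
  have hw : (A * C * Aᵀ + α • Γ) *ᵥ w = b := by
    rw [mulVec_mulVec, mul_nonsing_inv _ hS.det_pos.ne'.isUnit, one_mulVec]
  have hres := levenbergMarquardt_residual A hw
  have hΓinv : Γ⁻¹ *ᵥ (α • (Γ *ᵥ w)) = α • w := by
    rw [mulVec_smul, mulVec_mulVec, nonsing_inv_mul _ hΓ.det_pos.ne'.isUnit, one_mulVec]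
  refine ⟨C *ᵥ (Aᵀ *ᵥ w), ?_, tikhonov_le_of_normal_eq hΓ.inv.posSemidef hC.inv.posSemidef A b
    hα.le ?_⟩
  · rw [hres, hΓinv, smul_dotProduct, dotProduct_smul, dotProduct_comm, smul_eq_mul,
      smul_eq_mul, ← mul_assoc, sq]
  · rw [hres, hΓinv, mulVec_mulVec, nonsing_inv_mul _ hC.det_pos.ne'.isUnit, one_mulVec,
      mulVec_smul]

end LevenbergMarquardt

theorem stmt_6_general {n p : ℕ}
    (Γ : Matrix (Fin n) (Fin n) ℝ) (C : Matrix (Fin p) (Fin p) ℝ)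
    (A : Matrix (Fin n) (Fin p) ℝ)
    (hΓ : Γ.PosDef) (hC : C.PosDef)
    (b : Fin n → ℝ)
    (κ : ℝ → ℝ)
    (hκ : ∀ α, κ α = α ^ 2 *
      (((A * C * Aᵀ + α • Γ)⁻¹ *ᵥ b) ⬝ᵥ (Γ *ᵥ ((A * C * Aᵀ + α • Γ)⁻¹ *ᵥ b)))) :
    ∀ α₁ α₂ : ℝ, 0 < α₁ → α₁ ≤ α₂ → κ α₁ ≤ κ α₂ := by
  intro α₁ α₂ hα₁ hle
  rcases hle.eq_or_lt with rfl | hlt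
  · rfl
  obtain ⟨x₁, hκ₁, hmin₁⟩ := exists_tikhonov_minimizer hΓ hC A b hα₁
  obtain ⟨x₂, hκ₂, hmin₂⟩ := exists_tikhonov_minimizer hΓ hC A b (hα₁.trans hlt)
  rw [hκ, hκ, ← hκ₁, ← hκ₂]
  exact le_of_minimizes_add_mul (fun x ↦ (b - A *ᵥ x) ⬝ᵥ (Γ⁻¹ *ᵥ (b - A *ᵥ x)))
    (fun x ↦ x ⬝ᵥ (C⁻¹ *ᵥ x)) hα₁.le hlt hmin₁ hmin₂

/-- The function `κ(α) = α² ((ACAᵀ+αΓ)⁻¹ b)ᵀ Γ ((ACAᵀ+αΓ)⁻¹ b)` is monotone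
nondecreasing on `(0, ∞)`. -/
theorem stmt_6 {n p : ℕ} (hn : 0 < n) (hp : 0 < p)
    (Γ : Matrix (Fin n) (Fin n) ℝ) (C : Matrix (Fin p) (Fin p) ℝ)
    (A : Matrix (Fin n) (Fin p) ℝ)
    (hΓ : Γ.PosDef) (hC : C.PosDef)
    (b : Fin n → ℝ)
    (κ : ℝ → ℝ)
    (hκ : ∀ α, κ α = α ^ 2 *
      (((A * C * Aᵀ + α • Γ)⁻¹ *ᵥ b) ⬝ᵥ (Γ *ᵥ ((A * C * Aᵀ + α • Γ)⁻¹ *ᵥ b)))) :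
    ∀ α₁ α₂ : ℝ, 0 < α₁ → α₁ ≤ α₂ → κ α₁ ≤ κ α₂ :=
  stmt_6_general Γ C A hΓ hC b κ hκ
end

section
/- Let n, p be positive natural numbers, let Γ be an n×n real positive definite matrix, let C be a p×p real positive definite matrix, let A be an n×p real matrix, and let b ∈ ℝⁿ. Define, for α > 0, κ(α) = α² · ((A C Aᵀ + α Γ)⁻¹ b)ᵀ Γ ((A C Aᵀ + α Γ)⁻¹ b). Then for every α > 0 one has κ(α) ≤ bᵀ Γ⁻¹ b. -/
open Matrix

/-
With `S = ACAᵀ ⪰ 0`, `M = S + αΓ` and `v = M⁻¹b`, we have `b = Mv`, so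
`bᵀΓ⁻¹b = (Mv)ᵀΓ⁻¹(Mv) = (Sv)ᵀΓ⁻¹(Sv) + 2α vᵀSv + α² vᵀΓv`.
The first two terms are nonnegative and the last one is `κ(α)`.
-/

section Expansion

variable {n R : Type*} [Fintype n] [CommRing R]

theorem Matrix.IsSymm.mulVec_dotProduct {Γ : Matrix n n R} (hΓ : Γ.IsSymm) (v w : n → R) :
    (Γ *ᵥ v) ⬝ᵥ w = v ⬝ᵥ (Γ *ᵥ w) := by
  rw [dotProduct_mulVec, ← vecMul_transpose, hΓ.eq, dotProduct_comm]

theorem Matrix.IsSymm.add_smul_mulVec_dotProduct_inv [DecidableEq n] {Γ : Matrix n n R}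
    (hΓ : Γ.IsSymm) (hΓdet : IsUnit Γ.det) (S : Matrix n n R) (α : R) (v : n → R) :
    ((S + α • Γ) *ᵥ v) ⬝ᵥ (Γ⁻¹ *ᵥ ((S + α • Γ) *ᵥ v)) =
      (S *ᵥ v) ⬝ᵥ (Γ⁻¹ *ᵥ (S *ᵥ v)) + 2 * α * (v ⬝ᵥ (S *ᵥ v)) + α ^ 2 * (v ⬝ᵥ (Γ *ᵥ v)) := by
  have hinv : Γ⁻¹ *ᵥ (Γ *ᵥ v) = v := by
    rw [mulVec_mulVec, nonsing_inv_mul _ hΓdet, one_mulVec]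
  have hcross : (Γ *ᵥ v) ⬝ᵥ (Γ⁻¹ *ᵥ (S *ᵥ v)) = v ⬝ᵥ (S *ᵥ v) := by
    rw [hΓ.mulVec_dotProduct, mulVec_mulVec, mul_nonsing_inv _ hΓdet, one_mulVec]
  simp only [add_mulVec, smul_mulVec, mulVec_add, mulVec_smul, hinv, add_dotProduct,
    dotProduct_add, smul_dotProduct, dotProduct_smul, hcross, smul_eq_mul]
  rw [dotProduct_comm (S *ᵥ v) v, dotProduct_comm (Γ *ᵥ v) v]
  ring

end Expansion

theorem Matrix.PosDef.sq_mul_dotProduct_mulVec_le {n : Type*} [Fintype n] [DecidableEq n]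
    {Γ S : Matrix n n ℝ} (hΓ : Γ.PosDef) (hS : S.PosSemidef) {α : ℝ} (hα : 0 ≤ α)
    (v : n → ℝ) :
    α ^ 2 * (v ⬝ᵥ (Γ *ᵥ v)) ≤ ((S + α • Γ) *ᵥ v) ⬝ᵥ (Γ⁻¹ *ᵥ ((S + α • Γ) *ᵥ v)) := by
  have hSv : 0 ≤ v ⬝ᵥ (S *ᵥ v) := by simpa using hS.dotProduct_mulVec_nonneg v
  have hΓS : 0 ≤ (S *ᵥ v) ⬝ᵥ (Γ⁻¹ *ᵥ (S *ᵥ v)) := by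
    simpa using hΓ.inv.posSemidef.dotProduct_mulVec_nonneg (S *ᵥ v)
  rw [(isHermitian_iff_isSymm.mp hΓ.isHermitian).add_smul_mulVec_dotProduct_inv
    hΓ.det_pos.ne'.isUnit]
  nlinarith

theorem stmt_8_general {n p : ℕ}
    (Γ : Matrix (Fin n) (Fin n) ℝ) (C : Matrix (Fin p) (Fin p) ℝ)
    (A : Matrix (Fin n) (Fin p) ℝ)
    (hΓ : Γ.PosDef) (hC : C.PosDef)
    (b : Fin n → ℝ)
    (κ : ℝ → ℝ)
    (hκ : ∀ α, κ α = α ^ 2 *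
      (((A * C * Aᵀ + α • Γ)⁻¹ *ᵥ b) ⬝ᵥ (Γ *ᵥ ((A * C * Aᵀ + α • Γ)⁻¹ *ᵥ b)))) :
    ∀ α : ℝ, 0 < α → κ α ≤ b ⬝ᵥ (Γ⁻¹ *ᵥ b) := by
  intro α hα
  have hS : (A * C * Aᵀ).PosSemidef := by
    simpa only [conjTranspose_eq_transpose_of_trivial] using
      hC.posSemidef.mul_mul_conjTranspose_same A
  have hM : (A * C * Aᵀ + α • Γ).PosDef := PosDef.posSemidef_add hS (hΓ.smul hα)
  have hb : (A * C * Aᵀ + α • Γ) *ᵥ ((A * C * Aᵀ + α • Γ)⁻¹ *ᵥ b) = b := by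
    rw [mulVec_mulVec, mul_nonsing_inv _ hM.det_pos.ne'.isUnit, one_mulVec]
  rw [hκ]
  simpa only [hb] using hΓ.sq_mul_dotProduct_mulVec_le hS hα.le ((A * C * Aᵀ + α • Γ)⁻¹ *ᵥ b)

/-- The weighted squared linearized residual
`κ(α) = α² ((ACAᵀ+αΓ)⁻¹ b)ᵀ Γ ((ACAᵀ+αΓ)⁻¹ b)` never exceeds the weighted squared
norm `bᵀ Γ⁻¹ b` of the data residual. -/
theorem stmt_8 {n p : ℕ} (hn : 0 < n) (hp : 0 < p)
    (Γ : Matrix (Fin n) (Fin n) ℝ) (C : Matrix (Fin p) (Fin p) ℝ)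
    (A : Matrix (Fin n) (Fin p) ℝ)
    (hΓ : Γ.PosDef) (hC : C.PosDef)
    (b : Fin n → ℝ)
    (κ : ℝ → ℝ)
    (hκ : ∀ α, κ α = α ^ 2 *
      (((A * C * Aᵀ + α • Γ)⁻¹ *ᵥ b) ⬝ᵥ (Γ *ᵥ ((A * C * Aᵀ + α • Γ)⁻¹ *ᵥ b)))) :
    ∀ α : ℝ, 0 < α → κ α ≤ b ⬝ᵥ (Γ⁻¹ *ᵥ b) :=
  stmt_8_general Γ C A hΓ hC b κ hκ
end

section
/- Let n, p be positive natural numbers, let Γ be an n×n real positive definite matrix, let C be a p×p real positive definite matrix, let A be an n×p real matrix, and let b ∈ ℝⁿ. Define, for α > 0, κ(α) = α² · ((A C Aᵀ + α Γ)⁻¹ b)ᵀ Γ ((A C Aᵀ + α Γ)⁻¹ b). Then κ(α) tends to bᵀ Γ⁻¹ b as α → ∞ (i.e., the limit of κ along the filter at infinity on (0,∞) equals bᵀΓ⁻¹b). -/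
open Matrix Filter Topology

/-! With `S = ACAᵀ`, factoring out `α` gives `(S + αΓ)⁻¹ = α⁻¹ (α⁻¹S + Γ)⁻¹`, so `κ(α) = q((α⁻¹S + Γ)⁻¹)` for the
continuous quadratic map `q N = (N b)ᵀ Γ (N b)`. As `α → ∞`, `α⁻¹S + Γ → Γ`, inversion is continuous
at the invertible `Γ`, and `q Γ⁻¹ = bᵀ Γ⁻¹ b`. -/

namespace Matrix

variable {ι : Type*} [Fintype ι] [DecidableEq ι]

/-- Unlike `Matrix.inv_smul'`, this needs no invertibility of `A`: if `A` is singular, so is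
`c • A`, and both sides are the junk value `0`. -/
theorem inv_smul_of_ne_zero {K : Type*} [Field K] (A : Matrix ι ι K) {c : K} (hc : c ≠ 0) :
    (c • A)⁻¹ = c⁻¹ • A⁻¹ := by
  by_cases hA : IsUnit A.det
  · exact inv_smul' (A := A) (Units.mk0 c hc) hA
  · have hcA : ¬IsUnit (c • A).det := by
      simpa [det_smul, isUnit_iff_ne_zero, hc] using hA
    rw [nonsing_inv_apply_not_isUnit _ hA, nonsing_inv_apply_not_isUnit _ hcA, smul_zero]

theorem tendsto_inv_smul_add_nonsing_inv (S Γ : Matrix ι ι ℝ) (hΓ : IsUnit Γ.det) :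
    Tendsto (fun α : ℝ => (α⁻¹ • S + Γ)⁻¹) atTop (𝓝 Γ⁻¹) := by
  have hinv : ContinuousAt Inv.inv Γ :=
    continuousAt_matrix_inv Γ (by
      rw [Ring.inverse_eq_inv']
      exact continuousAt_inv₀ hΓ.ne_zero)
  have hlim : Tendsto (fun α : ℝ => α⁻¹ • S + Γ) atTop (𝓝 Γ) := by
    simpa using (tendsto_inv_atTop_zero (𝕜 := ℝ) |>.smul_const S).add_const Γ
  exact hinv.tendsto.comp hlim

theorem tendsto_sq_mul_dotProduct_inv_add_smul (S Γ : Matrix ι ι ℝ) (hΓ : IsUnit Γ.det)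
    (b : ι → ℝ) :
    Tendsto (fun α : ℝ => α ^ 2 *
      (((S + α • Γ)⁻¹ *ᵥ b) ⬝ᵥ (Γ *ᵥ ((S + α • Γ)⁻¹ *ᵥ b))))
      atTop (𝓝 (b ⬝ᵥ (Γ⁻¹ *ᵥ b))) := by
  set q : Matrix ι ι ℝ → ℝ := fun N => (N *ᵥ b) ⬝ᵥ (Γ *ᵥ (N *ᵥ b)) with hq_def
  have hq : Continuous q := by
    have hNb : Continuous fun N : Matrix ι ι ℝ => N *ᵥ b :=
      continuous_id.matrix_mulVec continuous_const
    exact hNb.dotProduct (continuous_const.matrix_mulVec hNb)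
  have hq_inv : q Γ⁻¹ = b ⬝ᵥ (Γ⁻¹ *ᵥ b) := by
    simp only [hq_def]
    rw [mulVec_mulVec, mul_nonsing_inv Γ hΓ, one_mulVec, dotProduct_comm]
  have hrescale : ∀ α : ℝ, α ≠ 0 → q (α⁻¹ • S + Γ)⁻¹ = α ^ 2 * q (S + α • Γ)⁻¹ := by
    intro α hα
    have hfactor : S + α • Γ = α • (α⁻¹ • S + Γ) := by
      rw [smul_add, smul_smul, mul_inv_cancel₀ hα, one_smul]
    rw [hfactor, inv_smul_of_ne_zero _ hα, hq_def]
    simp only [smul_mulVec, mulVec_smul, smul_dotProduct, dotProduct_smul, smul_eq_mul]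
    field_simp
  rw [← hq_inv]
  refine ((hq.tendsto _).comp (tendsto_inv_smul_add_nonsing_inv S Γ hΓ)).congr' ?_
  filter_upwards [eventually_ne_atTop 0] with α hα
  exact hrescale α hα

end Matrix

theorem stmt_9_general {n p : ℕ}
    (Γ : Matrix (Fin n) (Fin n) ℝ) (C : Matrix (Fin p) (Fin p) ℝ)
    (A : Matrix (Fin n) (Fin p) ℝ)
    (hΓ : Γ.PosDef)
    (b : Fin n → ℝ)
    (κ : ℝ → ℝ)
    (hκ : ∀ α, κ α = α ^ 2 *
      (((A * C * Aᵀ + α • Γ)⁻¹ *ᵥ b) ⬝ᵥ (Γ *ᵥ ((A * C * Aᵀ + α • Γ)⁻¹ *ᵥ b)))) :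
    Tendsto κ atTop (nhds (b ⬝ᵥ (Γ⁻¹ *ᵥ b))) := by
  rw [funext hκ]
  exact tendsto_sq_mul_dotProduct_inv_add_smul _ Γ ((isUnit_iff_isUnit_det Γ).mp hΓ.isUnit) b

/-- The weighted squared linearized residual
`κ(α) = α² ((ACAᵀ+αΓ)⁻¹ b)ᵀ Γ ((ACAᵀ+αΓ)⁻¹ b)` tends to `bᵀ Γ⁻¹ b` as `α → ∞`. -/
theorem stmt_9 {n p : ℕ} (hn : 0 < n) (hp : 0 < p)
    (Γ : Matrix (Fin n) (Fin n) ℝ) (C : Matrix (Fin p) (Fin p) ℝ)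
    (A : Matrix (Fin n) (Fin p) ℝ)
    (hΓ : Γ.PosDef) (hC : C.PosDef)
    (b : Fin n → ℝ)
    (κ : ℝ → ℝ)
    (hκ : ∀ α, κ α = α ^ 2 *
      (((A * C * Aᵀ + α • Γ)⁻¹ *ᵥ b) ⬝ᵥ (Γ *ᵥ ((A * C * Aᵀ + α • Γ)⁻¹ *ᵥ b)))) :
    Tendsto κ atTop (nhds (b ⬝ᵥ (Γ⁻¹ *ᵥ b))) :=
  stmt_9_general Γ C A hΓ b κ hκ
end
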